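/- arXiv:1504.03391 — 4 statements merged into one kernel-verified Lean document; each statement's English description precedes it below -/
import Mathlib

section
/- For any totally symmetric submodular function f : {0,1}^n → [0,1] and any x ∈ {0,1}^n with n/3 ≤ Σ_{i=1}^n x_i ≤ 2n/3, one has |∂_i f(x)| ≤ 3/n for all i ∈ [n]. -/
open Finset

noncomputable section

/-- The real value (0 or 1) of a Boolean coordinate. -/
def bval (b : Bool) : ℝ := if b then 1 else 0

/-- Expectation over the uniform distribution on `{0,1}^n`. -/
def EU {n : ℕ} (g : (Fin n → Bool) → ℝ) : ℝ :=
  (∑ x : Fin n → Bool, g x) / 2 ^ n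

/-- `ℓ₂` norm with respect to the uniform distribution. -/
def l2norm {n : ℕ} (g : (Fin n → Bool) → ℝ) : ℝ :=
  Real.sqrt (EU (fun x => g x ^ 2))

/-- `ℓ₁` norm with respect to the uniform distribution. -/
def l1norm {n : ℕ} (g : (Fin n → Bool) → ℝ) : ℝ :=
  EU (fun x => |g x|)

/-- Discrete partial derivative `∂_i f`. -/
def d1 {n : ℕ} (f : (Fin n → Bool) → ℝ) (i : Fin n) (x : Fin n → Bool) : ℝ :=
  f (Function.update x i true) - f (Function.update x i false)

/-- Second-order discrete derivative `∂_{ij} f`, with `∂_{ii} f ≡ 0`. -/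
def d2 {n : ℕ} (f : (Fin n → Bool) → ℝ) (i j : Fin n) (x : Fin n → Bool) : ℝ :=
  if i = j then 0 else
    f (Function.update (Function.update x i true) j true)
      - f (Function.update (Function.update x i true) j false)
      - f (Function.update (Function.update x i false) j true)
      + f (Function.update (Function.update x i false) j false)

/-- The parity (character) `χ_S(x) = (-1)^{Σ_{i∈S} x_i}`. -/
def chi {n : ℕ} (S : Finset (Fin n)) (x : Fin n → Bool) : ℝ :=
  ∏ i ∈ S, (if x i then (-1 : ℝ) else 1)

/-- The Fourier coefficient `f̂(S) = E_{x∼U}[f(x) χ_S(x)]`. -/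
def fcoeff {n : ℕ} (f : (Fin n → Bool) → ℝ) (S : Finset (Fin n)) : ℝ :=
  EU (fun x => f x * chi S x)

/-- Submodularity of a function on the Boolean cube. -/
def Submodular {n : ℕ} (f : (Fin n → Bool) → ℝ) : Prop :=
  ∀ x y, f (x ⊔ y) + f (x ⊓ y) ≤ f x + f y

/-- `f` is XOS: a maximum of finitely many nonnegative linear functions. -/
def IsXOS {n : ℕ} (f : (Fin n → Bool) → ℝ) : Prop :=
  ∃ (m : ℕ) (w : Fin (m + 1) → Fin n → ℝ),
    (∀ c i, 0 ≤ w c i) ∧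
    ∀ x, f x = Finset.univ.sup' Finset.univ_nonempty
      (fun c => ∑ i, w c i * bval (x i))

open Classical in
/-- Probability of an event under the uniform distribution on `{0,1}^n`. -/
def PrU {n : ℕ} (P : (Fin n → Bool) → Prop) : ℝ :=
  EU (fun x => if P x then 1 else 0)

/-- The threshold norm `‖h‖_T = sup{α ≥ 0 : Pr[|h(x)| ≥ α] ≥ α³}`. -/
def tnorm {n : ℕ} (h : (Fin n → Bool) → ℝ) : ℝ :=
  sSup {α : ℝ | 0 ≤ α ∧ α ^ 3 ≤ PrU (fun x => α ≤ |h x|)}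

end

/-- Hamming weight of a point of the cube. -/
def wt {n : ℕ} (x : Fin n → Bool) : ℕ := ∑ i, (x i).toNat

/-! A totally symmetric `f` is `f x = g (wt x)` for a sequence `g : ℕ → [0, 1]`, and submodularity
along a chain of the cube makes `g` concave on `{0, …, n}`. For a concave sequence the increment
`g (m + 1) - g m` is at most the average slope `(g (m + 1) - g 0) / (m + 1)` on the left and at least
the average slope `(g n - g m) / (n - m)` on the right; both slopes are bounded by `3 / n` in absolute
value once `m ≤ wt x ≤ m + 1` and `n / 3 ≤ wt x ≤ 2n / 3`. -/

def ConcaveUpTo (g : ℕ → ℝ) (n : ℕ) : Prop :=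
  ∀ k, k + 2 ≤ n → g (k + 2) - g (k + 1) ≤ g (k + 1) - g k

namespace ConcaveUpTo

variable {g : ℕ → ℝ} {n : ℕ}

theorem sub_le_sub (hg : ConcaveUpTo g n)
    {j k : ℕ} (hjk : j ≤ k) (hk : k + 1 ≤ n) : g (k + 1) - g k ≤ g (j + 1) - g j := by
  induction hjk with
  | refl => exact le_rfl
  | @step k hjk ih => exact (hg k hk).trans (ih (by omega))

theorem succ_mul_sub_le (hg : ConcaveUpTo g n)
    {m : ℕ} (hm : m + 1 ≤ n) : ((m : ℝ) + 1) * (g (m + 1) - g m) ≤ g (m + 1) - g 0 :=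
  calc ((m : ℝ) + 1) * (g (m + 1) - g m) = ∑ _j ∈ range (m + 1), (g (m + 1) - g m) := by
        simp [mul_sub]
    _ ≤ ∑ j ∈ range (m + 1), (g (j + 1) - g j) :=
        sum_le_sum fun j hj => hg.sub_le_sub (Nat.lt_succ_iff.mp (mem_range.mp hj)) hm
    _ = g (m + 1) - g 0 := sum_range_sub g (m + 1)

theorem sub_le_mul_sub (hg : ConcaveUpTo g n)
    {m : ℕ} (hm : m ≤ n) : g n - g m ≤ ((n : ℝ) - m) * (g (m + 1) - g m) :=
  calc g n - g m = ∑ t ∈ range (n - m), (g (m + (t + 1)) - g (m + t)) := by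
        rw [sum_range_sub (fun t => g (m + t)), Nat.add_sub_cancel' hm, Nat.add_zero]
    _ ≤ ∑ _t ∈ range (n - m), (g (m + 1) - g m) :=
        sum_le_sum fun t ht => hg.sub_le_sub (j := m) (k := m + t) (by omega)
          (by have := mem_range.mp ht; omega)
    _ = ((n : ℝ) - m) * (g (m + 1) - g m) := by simp [Nat.cast_sub hm, mul_sub]

theorem abs_sub_le (hg : ConcaveUpTo g n)
    (hg01 : ∀ k ≤ n, g k ∈ Set.Icc (0 : ℝ) 1) {m : ℕ} {c : ℝ} (hc : 0 < c)
    (hcm : c ≤ m + 1) (hcn : c ≤ n - m) : |g (m + 1) - g m| ≤ 1 / c := by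
  have hmn : m + 1 ≤ n := by
    have : (m : ℝ) < n := by linarith
    exact_mod_cast this
  have hleft := hg.succ_mul_sub_le hmn
  have hright := hg.sub_le_mul_sub (m := m) (by omega)
  obtain ⟨h0, -⟩ := hg01 0 (Nat.zero_le n)
  obtain ⟨-, h1⟩ := hg01 (m + 1) hmn
  obtain ⟨hn0, -⟩ := hg01 n le_rfl
  obtain ⟨-, hm1⟩ := hg01 m (by omega)
  rw [abs_le, le_div_iff₀ hc, ← neg_div, div_le_iff₀ hc]
  constructor <;> rcases le_or_gt 0 (g (m + 1) - g m) with hD | hD <;> nlinarith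

end ConcaveUpTo

section Cube

variable {n : ℕ} {f : (Fin n → Bool) → ℝ}

def initialSegment (n k : ℕ) : Fin n → Bool := fun j => decide (j.val < k)

theorem wt_initialSegment {k : ℕ} (hk : k ≤ n) : wt (initialSegment n k) = k := by
  simp only [wt, initialSegment, Bool.toNat, Bool.cond_decide]
  rw [sum_boole]
  simp [Fin.card_filter_val_lt, hk]

theorem wt_le (x : Fin n → Bool) : wt x ≤ n :=
  calc wt x ≤ ∑ _i : Fin n, 1 := sum_le_sum fun i _ => Bool.toNat_le (x i)
    _ = n := by simp

theorem wt_update_add (x : Fin n → Bool) (i : Fin n) (b : Bool) :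
    wt (Function.update x i b) + (x i).toNat = wt x + b.toNat := by
  simp only [wt]
  rw [← add_sum_erase _ _ (mem_univ i), ← add_sum_erase _ _ (mem_univ i)]
  rw [sum_congr rfl fun j hj => by rw [Function.update_of_ne (ne_of_mem_erase hj)]]
  simp only [Function.update_self]
  ring

theorem wt_update_of_eq_false {x : Fin n → Bool} {i : Fin n} (hx : x i = false) (b : Bool) :
    wt (Function.update x i b) = wt x + b.toNat := by
  simpa [hx] using wt_update_add x i b

theorem Submodular.d2_nonpos (hf : Submodular f) (i j : Fin n) (x : Fin n → Bool) :
    d2 f i j x ≤ 0 := by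
  unfold d2
  split_ifs with hij
  · exact le_rfl
  suffices f (Function.update (Function.update x i true) j true)
      + f (Function.update (Function.update x i false) j false)
      ≤ f (Function.update (Function.update x i true) j false)
      + f (Function.update (Function.update x i false) j true) by linarith
  convert hf (Function.update (Function.update x i true) j false)
    (Function.update (Function.update x i false) j true) using 3 <;>
  · ext k
    by_cases hkj : k = j
    · subst hkj; simp
    · by_cases hki : k = i
      · subst hki; simp [hkj]
      · simp [hkj, hki]

theorem apply_eq_apply_initialSegment (hsym : ∀ x y, wt x = wt y → f x = f y)
    (x : Fin n → Bool) : f x = f (initialSegment n (wt x)) :=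
  hsym _ _ (wt_initialSegment (wt_le x)).symm

theorem Submodular.concave_initialSegment (hf : Submodular f)
    (hsym : ∀ x y, wt x = wt y → f x = f y) :
    ConcaveUpTo (fun k => f (initialSegment n k)) n := by
  intro k hk
  let i : Fin n := ⟨k, by omega⟩
  let j : Fin n := ⟨k + 1, hk⟩
  have hij : i ≠ j := by simp [i, j, Fin.ext_iff]
  have hf_update : ∀ b c : Bool,
      f (Function.update (Function.update (initialSegment n k) i b) j c)
      = f (initialSegment n (k + b.toNat + c.toNat)) := by
    intro b c
    rw [apply_eq_apply_initialSegment hsym, wt_update_of_eq_false, wt_update_of_eq_false,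
      wt_initialSegment (by omega)]
    · simp [initialSegment, i]
    · simp [Function.update_of_ne hij.symm, initialSegment, j]
  have := hf.d2_nonpos i j (initialSegment n k)
  simp only [d2, if_neg hij, hf_update, Bool.toNat_true, Bool.toNat_false, add_zero, add_assoc,
    Nat.reduceAdd] at this
  linarith

theorem d1_eq_of_symmetric (hsym : ∀ x y, wt x = wt y → f x = f y) (x : Fin n → Bool)
    (i : Fin n) :
    d1 f i x = f (initialSegment n (wt (Function.update x i false) + 1))
      - f (initialSegment n (wt (Function.update x i false))) := by
  have hwt : wt (Function.update x i true) = wt (Function.update x i false) + 1 := by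
    have htrue := wt_update_add x i true
    have hfalse := wt_update_add x i false
    rw [Bool.toNat_true] at htrue
    rw [Bool.toNat_false] at hfalse
    omega
  rw [d1, apply_eq_apply_initialSegment hsym, hwt, ← apply_eq_apply_initialSegment hsym]

end Cube

/-- For a totally symmetric submodular f : {0,1}^n → [0,1] and x with
n/3 ≤ Σ x_i ≤ 2n/3, we have |∂_i f(x)| ≤ 3/n for all i. -/
theorem stmt5 {n : ℕ} (f : (Fin n → Bool) → ℝ) (hf : Submodular f)
    (hsym : ∀ x y, wt x = wt y → f x = f y)
    (hrange : ∀ x, f x ∈ Set.Icc (0 : ℝ) 1)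
    (x : Fin n → Bool) (hx1 : (n : ℝ) / 3 ≤ (wt x : ℝ)) (hx2 : (wt x : ℝ) ≤ 2 * n / 3) :
    ∀ i : Fin n, |d1 f i x| ≤ 3 / n := by
  intro i
  have hn : (0 : ℝ) < n := by exact_mod_cast i.pos
  set m := wt (Function.update x i false)
  have hm : (m : ℝ) ≤ wt x ∧ (wt x : ℝ) ≤ m + 1 := by
    have hwt := wt_update_add x i false
    have hxi := Bool.toNat_le (x i)
    rw [Bool.toNat_false, add_zero] at hwt
    constructor <;> exact_mod_cast (by omega)
  rw [d1_eq_of_symmetric hsym, show (3 : ℝ) / n = 1 / (n / 3) by field_simp]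
  exact (hf.concave_initialSegment hsym).abs_sub_le
    (fun k _ => hrange _) (by positivity) (by linarith) (by linarith)
end

section
/- There is a universal constant C > 0 such that for every submodular function f : {0,1}^n → [0,1] and every 0 < ε < 1, the number of coordinates i ∈ [n] with ‖∂_i f‖_T ≥ ε is at most (C/ε) · log(2/ε). -/
open Finset

/-!
Since `f` is submodular, each `∂ᵢf` is antitone, so `Eᵢ = {∂ᵢf ≤ -ε}` is an up-set. For the
`p`-biased measures `μ_p`, an up-set satisfies `μ_{pq}(E) ≤ μ_p(E) μ_q(E)`: a `pq`-biased point is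
the meet of independent `p`- and `q`-biased points. Taking `p ^ m = 1/2` with `m ≈ log (1/δ)`,
every `Eᵢ` of uniform measure at least `δ` has `μ_p(Eᵢ) ≥ 1/e`. On the other hand, switching on
all coordinates `i` with `xᵢ = 0` and `x ∈ Eᵢ` lowers `f` by at least `ε` each, so there are at
most `1/ε` of them; averaging over `x ∼ μ_p` gives `(1 - p) ∑ᵢ μ_p(Eᵢ) ≤ 1/ε`, and `1 - p ≥ 1/(2m)`
bounds the number of such `i` by `2em/ε`. Upper tails of `∂ᵢf` are lower tails of `∂ᵢ` of
`x ↦ f xᶜ`, and `‖∂ᵢf‖_T ≥ ε` gives a tail of probability `(ε/2)³` at level `ε/2`.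
-/

noncomputable section

theorem one_div_two_mul_le_one_sub {p : ℝ} (hp0 : 0 ≤ p) {m : ℕ} (hm : m ≠ 0)
    (hpm : p ^ m = 1 / 2) : 1 / (2 * m) ≤ 1 - p := by
  have hbern := one_add_mul_le_pow (a := p - 1) (by linarith) m
  rw [add_sub_cancel, hpm] at hbern
  have hm0 : (0 : ℝ) < m := by exact_mod_cast Nat.pos_of_ne_zero hm
  rw [div_le_iff₀ (by positivity)]
  nlinarith

section BiasedCube

variable {ι : Type*} [Fintype ι]

def bernWeight (p : ℝ) (b : Bool) : ℝ := if b then p else 1 - p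

def biasedWeight (p : ℝ) (x : ι → Bool) : ℝ := ∏ i, bernWeight p (x i)

theorem bernWeight_nonneg {p : ℝ} (hp0 : 0 ≤ p) (hp1 : p ≤ 1) (b : Bool) :
    0 ≤ bernWeight p b := by
  unfold bernWeight
  split <;> linarith

theorem biasedWeight_nonneg {p : ℝ} (hp0 : 0 ≤ p) (hp1 : p ≤ 1) (x : ι → Bool) :
    0 ≤ biasedWeight p x :=
  prod_nonneg fun _ _ => bernWeight_nonneg hp0 hp1 _

theorem sum_bernWeight (p : ℝ) : ∑ b, bernWeight p b = 1 := by simp [bernWeight]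

theorem sum_bernWeight_and (p q : ℝ) (b : Bool) :
    ∑ c ∈ univ.filter (fun c : Bool × Bool => (c.1 && c.2) = b),
        bernWeight p c.1 * bernWeight q c.2 = bernWeight (p * q) b := by
  cases b
  · simp [bernWeight, sum_filter, Fintype.sum_prod_type]
    ring
  · simp [bernWeight, sum_filter, Fintype.sum_prod_type]

variable [DecidableEq ι]

theorem sum_prod_mul_comp {κ β : Type*} [Fintype κ] [Fintype β] [DecidableEq β]
    (φ : κ → β) (ψ : κ → ℝ) (h : (ι → β) → ℝ) :
    ∑ v : ι → κ, (∏ i, ψ (v i)) * h (φ ∘ v)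
      = ∑ x : ι → β, (∏ i, ∑ c ∈ univ.filter (φ · = x i), ψ c) * h x := by
  rw [← sum_fiberwise univ (φ ∘ ·)]
  refine sum_congr rfl fun x _ => ?_
  have hfib : univ.filter (fun v : ι → κ => φ ∘ v = x)
      = Fintype.piFinset fun i => univ.filter (φ · = x i) := by
    ext v; simp [Fintype.mem_piFinset, funext_iff]
  rw [prod_univ_sum, ← hfib, sum_mul]
  exact sum_congr rfl fun v hv => by rw [(mem_filter.mp hv).2]

theorem sum_biasedWeight (p : ℝ) : ∑ x : ι → Bool, biasedWeight p x = 1 := by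
  simp only [biasedWeight]
  rw [← Fintype.prod_sum]
  simp [bernWeight]

theorem sum_biasedWeight_mul_mul_inf (p q : ℝ) (h : (ι → Bool) → ℝ) :
    ∑ x, biasedWeight (p * q) x * h x
      = ∑ y, ∑ z, biasedWeight p y * biasedWeight q z * h (y ⊓ z) := by
  calc ∑ x, biasedWeight (p * q) x * h x
      = ∑ x : ι → Bool, (∏ i, ∑ c ∈ univ.filter (fun c : Bool × Bool => (c.1 && c.2) = x i),
          bernWeight p c.1 * bernWeight q c.2) * h x := by
        simp only [sum_bernWeight_and, biasedWeight]
    _ = ∑ v : ι → Bool × Bool, (∏ i, bernWeight p (v i).1 * bernWeight q (v i).2)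
          * h (fun i => (v i).1 && (v i).2) :=
        (sum_prod_mul_comp (fun c : Bool × Bool => c.1 && c.2) _ h).symm
    _ = ∑ y, ∑ z, biasedWeight p y * biasedWeight q z * h (y ⊓ z) := by
        rw [← Fintype.sum_prod_type', ← (Equiv.arrowProdEquivProdArrow _ _ _).sum_comp]
        simp [biasedWeight, prod_mul_distrib]
        rfl

theorem sum_biasedWeight_mul_of_update_eq (p : ℝ) (i : ι) (F : Bool → ℝ) {G : (ι → Bool) → ℝ}
    (hG : ∀ x b, G (Function.update x i b) = G x) :
    ∑ x, biasedWeight p x * (F (x i) * G x)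
      = (∑ b, bernWeight p b * F b) * ∑ x, biasedWeight p x * G x := by
  set e := Equiv.funSplitAt i Bool
  have he_apply : ∀ b y, e.symm (b, y) i = b := fun b y => by
    simp [e, Equiv.funSplitAt_symm_apply]
  have hw : ∀ b y, biasedWeight p (e.symm (b, y)) = bernWeight p b * ∏ j, bernWeight p (y j) := by
    intro b y
    rw [biasedWeight, Fintype.prod_eq_mul_prod_subtype_ne _ i, he_apply]
    congr 1
    refine prod_congr rfl fun j _ => ?_
    simp [e, Equiv.funSplitAt_symm_apply, j.2]
  have hG' : ∀ b y, G (e.symm (b, y)) = G (e.symm (false, y)) := by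
    intro b y
    rw [← hG (e.symm (false, y)) b]
    congr 1
    ext j
    by_cases hj : j = i
    · subst hj; simp [he_apply]
    · simp [e, Equiv.funSplitAt_symm_apply, hj]
  have key : ∀ Φ : Bool → ℝ, ∑ x, biasedWeight p x * (Φ (x i) * G x)
      = (∑ b, bernWeight p b * Φ b) * ∑ y, (∏ j, bernWeight p (y j)) * G (e.symm (false, y)) := by
    intro Φ
    rw [← e.symm.sum_comp, Fintype.sum_prod_type, sum_mul]
    refine sum_congr rfl fun b _ => ?_
    rw [mul_sum]
    refine sum_congr rfl fun y _ => ?_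
    rw [hw, he_apply, hG']
    ring
  have hsum := key fun _ => 1
  simp only [one_mul, mul_one, sum_bernWeight] at hsum
  rw [key F, hsum]

def biasedProb (p : ℝ) (E : Set (ι → Bool)) : ℝ := ∑ x, biasedWeight p x * E.indicator 1 x

theorem biasedProb_nonneg {p : ℝ} (hp0 : 0 ≤ p) (hp1 : p ≤ 1) (E : Set (ι → Bool)) :
    0 ≤ biasedProb p E :=
  sum_nonneg fun x _ =>
    mul_nonneg (biasedWeight_nonneg hp0 hp1 x) (Set.indicator_nonneg (fun _ _ => zero_le_one) x)

theorem biasedProb_le_one {p : ℝ} (hp0 : 0 ≤ p) (hp1 : p ≤ 1) (E : Set (ι → Bool)) :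
    biasedProb p E ≤ 1 := by
  calc biasedProb p E ≤ ∑ x, biasedWeight p x * 1 :=
        sum_le_sum fun x _ => mul_le_mul_of_nonneg_left
          (Set.indicator_le_self' (fun _ _ => zero_le_one) x) (biasedWeight_nonneg hp0 hp1 x)
    _ = 1 := by simp [sum_biasedWeight]

theorem IsUpperSet.biasedProb_mul_le {E : Set (ι → Bool)} (hE : IsUpperSet E)
    {p q : ℝ} (hp0 : 0 ≤ p) (hp1 : p ≤ 1) (hq0 : 0 ≤ q) (hq1 : q ≤ 1) :
    biasedProb (p * q) E ≤ biasedProb p E * biasedProb q E := by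
  rw [biasedProb, sum_biasedWeight_mul_mul_inf, biasedProb, biasedProb, sum_mul_sum]
  refine sum_le_sum fun y _ => sum_le_sum fun z _ => ?_
  have hind : E.indicator (1 : (ι → Bool) → ℝ) (y ⊓ z) ≤ E.indicator 1 y * E.indicator 1 z := by
    by_cases hyz : y ⊓ z ∈ E
    · simp [hyz, hE inf_le_left hyz, hE inf_le_right hyz]
    · simp only [Set.indicator_of_notMem hyz]
      exact mul_nonneg (Set.indicator_nonneg (fun _ _ => zero_le_one) y)
        (Set.indicator_nonneg (fun _ _ => zero_le_one) z)
  calc biasedWeight p y * biasedWeight q z * E.indicator 1 (y ⊓ z)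
      ≤ biasedWeight p y * biasedWeight q z * (E.indicator 1 y * E.indicator 1 z) :=
        mul_le_mul_of_nonneg_left hind
          (mul_nonneg (biasedWeight_nonneg hp0 hp1 y) (biasedWeight_nonneg hq0 hq1 z))
    _ = biasedWeight p y * E.indicator 1 y * (biasedWeight q z * E.indicator 1 z) := by ring

theorem IsUpperSet.biasedProb_pow_le {E : Set (ι → Bool)} (hE : IsUpperSet E)
    {p : ℝ} (hp0 : 0 ≤ p) (hp1 : p ≤ 1) (m : ℕ) :
    biasedProb (p ^ m) E ≤ biasedProb p E ^ m := by
  induction m with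
  | zero => simpa using biasedProb_le_one zero_le_one le_rfl E
  | succ m ih =>
    calc biasedProb (p ^ (m + 1)) E = biasedProb (p ^ m * p) E := by rw [pow_succ]
      _ ≤ biasedProb (p ^ m) E * biasedProb p E :=
        hE.biasedProb_mul_le (pow_nonneg hp0 m) (pow_le_one₀ hp0 hp1) hp0 hp1
      _ ≤ biasedProb p E ^ m * biasedProb p E :=
        mul_le_mul_of_nonneg_right ih (biasedProb_nonneg hp0 hp1 E)
      _ = biasedProb p E ^ (m + 1) := (pow_succ _ _).symm

theorem IsUpperSet.exp_neg_one_le_biasedProb {E : Set (ι → Bool)} (hE : IsUpperSet E)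
    {p : ℝ} (hp0 : 0 ≤ p) (hp1 : p ≤ 1) {m : ℕ} (hm : m ≠ 0) {δ : ℝ} (hδ : 0 < δ)
    (hδm : Real.log (1 / δ) ≤ m) (hδE : δ ≤ biasedProb (p ^ m) E) :
    Real.exp (-1) ≤ biasedProb p E := by
  by_contra! hlt
  have hexp : Real.exp (-1) ^ m ≤ δ := by
    rw [← Real.exp_nat_mul, ← Real.exp_log hδ]
    refine Real.exp_le_exp.mpr ?_
    rw [one_div, Real.log_inv] at hδm
    linarith
  have := pow_lt_pow_left₀ hlt (biasedProb_nonneg hp0 hp1 E) hm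
  linarith [hE.biasedProb_pow_le hp0 hp1 m]

end BiasedCube

section Cube

variable {n : ℕ}

theorem biasedProb_half (P : (Fin n → Bool) → Prop) : biasedProb (1 / 2) {x | P x} = PrU P := by
  classical
  have hw : ∀ x : Fin n → Bool, biasedWeight (1 / 2) x = 1 / 2 ^ n := fun x => by
    simp only [biasedWeight, bernWeight]
    norm_num
  simp only [biasedProb, hw, PrU, EU, Set.indicator_apply, Set.mem_ofPred_eq, Pi.one_apply,
    ← mul_sum]
  rw [one_div_mul_eq_div]

theorem PrU_nonneg (P : (Fin n → Bool) → Prop) : 0 ≤ PrU P := by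
  rw [← biasedProb_half]
  exact biasedProb_nonneg (by norm_num) (by norm_num) _

theorem PrU_mono {P Q : (Fin n → Bool) → Prop} (h : ∀ x, P x → Q x) : PrU P ≤ PrU Q := by
  unfold PrU EU
  gcongr with x
  dsimp only
  split_ifs <;> simp_all

theorem PrU_or_le (P Q : (Fin n → Bool) → Prop) :
    PrU (fun x => P x ∨ Q x) ≤ PrU P + PrU Q := by
  unfold PrU EU
  rw [← add_div, ← sum_add_distrib]
  gcongr with x
  split_ifs <;> simp_all

theorem PrU_comp_compl (P : (Fin n → Bool) → Prop) : PrU (fun x => P xᶜ) = PrU P := by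
  classical
  unfold PrU EU
  congr 1
  exact Equiv.sum_comp (Function.Involutive.toPerm _ compl_involutive)
    fun x => if P x then (1 : ℝ) else 0

theorem pow_three_le_PrU_of_lt_tnorm {h : (Fin n → Bool) → ℝ} {α : ℝ} (hα : 0 ≤ α)
    (hlt : α < tnorm h) : α ^ 3 ≤ PrU (fun x => α ≤ |h x|) := by
  have hne : {β : ℝ | 0 ≤ β ∧ β ^ 3 ≤ PrU (fun x => β ≤ |h x|)}.Nonempty :=
    ⟨0, le_rfl, by simpa using PrU_nonneg _⟩
  obtain ⟨β, ⟨-, hβ⟩, hαβ⟩ := exists_lt_of_lt_csSup hne hlt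
  calc α ^ 3 ≤ β ^ 3 := pow_le_pow_left₀ hα hαβ.le 3
    _ ≤ PrU (fun x => β ≤ |h x|) := hβ
    _ ≤ PrU (fun x => α ≤ |h x|) := PrU_mono fun x hx => hαβ.le.trans hx

theorem d1_update (f : (Fin n → Bool) → ℝ) (i : Fin n) (x : Fin n → Bool) (b : Bool) :
    d1 f i (Function.update x i b) = d1 f i x := by
  simp [d1]

theorem d1_comp_compl (f : (Fin n → Bool) → ℝ) (i : Fin n) (x : Fin n → Bool) :
    d1 (fun y => f yᶜ) i x = -d1 f i xᶜ := by
  have hcompl : ∀ b, (Function.update x i b)ᶜ = Function.update xᶜ i (!b) := fun b => by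
    ext j
    by_cases hj : j = i
    · subst hj; simp
    · simp [hj]
  simp only [d1, hcompl, Bool.not_true, Bool.not_false, neg_sub]

theorem Submodular.comp_compl {f : (Fin n → Bool) → ℝ} (hf : Submodular f) :
    Submodular fun x => f xᶜ := fun x y => by
  simpa [compl_sup, compl_inf, add_comm] using hf xᶜ yᶜ

theorem Submodular.d1_antitone {f : (Fin n → Bool) → ℝ} (hf : Submodular f) (i : Fin n) :
    Antitone (d1 f i) := by
  intro x y hxy
  have key := hf (Function.update x i true) (Function.update y i false)
  have hsup : Function.update x i true ⊔ Function.update y i false = Function.update y i true := by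
    ext j
    by_cases hj : j = i
    · subst hj; simp
    · simp [hj, sup_eq_right.mpr (hxy j)]
  have hinf : Function.update x i true ⊓ Function.update y i false = Function.update x i false := by
    ext j
    by_cases hj : j = i
    · subst hj; simp
    · simp [hj, inf_eq_left.mpr (hxy j)]
  rw [hsup, hinf] at key
  simp only [d1]
  linarith

theorem Submodular.isUpperSet_setOf_d1_le {f : (Fin n → Bool) → ℝ} (hf : Submodular f)
    (i : Fin n) (c : ℝ) : IsUpperSet {x | d1 f i x ≤ c} :=
  fun _ _ hxy hx => (hf.d1_antitone i hxy).trans hx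

theorem Submodular.apply_sup_le {f : (Fin n → Bool) → ℝ} (hf : Submodular f)
    (x : Fin n → Bool) (S : Finset (Fin n)) (hS : ∀ i ∈ S, x i = false) :
    f (x ⊔ fun j => decide (j ∈ S)) ≤ f x + ∑ i ∈ S, d1 f i x := by
  induction S using Finset.induction_on with
  | empty => simp [show (x ⊔ fun _ => false) = x from sup_of_le_left fun _ => Bool.false_le _]
  | insert i S hiS ih =>
    set y := x ⊔ fun j => decide (j ∈ S)
    have hyi : y i = false := by simp [y, hS i (mem_insert_self i S), hiS]
    have hy : (x ⊔ fun j => decide (j ∈ insert i S)) = Function.update y i true := by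
      ext j
      by_cases hj : j = i
      · subst hj; simp
      · simp [y, hj]
    have hstep : f (Function.update y i true) = f y + d1 f i y := by
      rw [d1, ← hyi, Function.update_eq_self]
      ring
    have hanti : d1 f i y ≤ d1 f i x := hf.d1_antitone i le_sup_left
    rw [hy, hstep, sum_insert hiS]
    linarith [ih fun j hj => hS j (mem_insert_of_mem hj)]

theorem Submodular.card_mul_le_one {f : (Fin n → Bool) → ℝ} (hf : Submodular f)
    (hf01 : ∀ x, f x ∈ Set.Icc (0 : ℝ) 1) (ε : ℝ) (x : Fin n → Bool) :
    #{i | x i = false ∧ d1 f i x ≤ -ε} * ε ≤ 1 := by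
  set S := univ.filter fun i => x i = false ∧ d1 f i x ≤ -ε
  have hsum : ∑ i ∈ S, d1 f i x ≤ ∑ _i ∈ S, -ε :=
    sum_le_sum fun i hi => (mem_filter.mp hi).2.2
  have := hf.apply_sup_le x S fun i hi => (mem_filter.mp hi).2.1
  simp only [sum_const, nsmul_eq_mul] at hsum
  linarith [(hf01 (x ⊔ fun j => decide (j ∈ S))).1, (hf01 x).2]

theorem Submodular.one_sub_mul_sum_biasedProb_le {f : (Fin n → Bool) → ℝ} (hf : Submodular f)
    (hf01 : ∀ x, f x ∈ Set.Icc (0 : ℝ) 1) {ε : ℝ} (hε : 0 < ε) {p : ℝ} (hp0 : 0 ≤ p)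
    (hp1 : p ≤ 1) :
    (1 - p) * ∑ i, biasedProb p {x | d1 f i x ≤ -ε} ≤ 1 / ε := by
  have hslice : ∀ i, (1 - p) * biasedProb p {x | d1 f i x ≤ -ε}
      = ∑ x, biasedWeight p x * (if x i = false ∧ d1 f i x ≤ -ε then 1 else 0) := by
    intro i
    have := sum_biasedWeight_mul_of_update_eq p i (fun b => if b then 0 else 1)
      (G := {x | d1 f i x ≤ -ε}.indicator 1) fun x b => by simp [Set.indicator_apply, d1_update]
    simp only [bernWeight, Fintype.sum_bool, if_true, Bool.false_eq_true, if_false, mul_zero,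
      zero_add, mul_one] at this
    rw [biasedProb, ← this]
    refine sum_congr rfl fun x _ => ?_
    cases x i <;> by_cases hd : d1 f i x ≤ -ε <;> simp [hd]
  rw [mul_sum, sum_congr rfl fun i _ => hslice i, sum_comm]
  calc ∑ x, ∑ i, biasedWeight p x * (if x i = false ∧ d1 f i x ≤ -ε then 1 else 0)
      = ∑ x, biasedWeight p x * #{i | x i = false ∧ d1 f i x ≤ -ε} := by
        simp only [← mul_sum, sum_boole]
    _ ≤ ∑ x, biasedWeight p x * (1 / ε) :=
        sum_le_sum fun x _ => mul_le_mul_of_nonneg_left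
          ((le_div_iff₀ hε).mpr (hf.card_mul_le_one hf01 ε x)) (biasedWeight_nonneg hp0 hp1 x)
    _ = 1 / ε := by rw [← sum_mul, sum_biasedWeight, one_mul]

theorem Submodular.card_le_PrU_d1_le_neg {f : (Fin n → Bool) → ℝ} (hf : Submodular f)
    (hf01 : ∀ x, f x ∈ Set.Icc (0 : ℝ) 1) {ε δ : ℝ} (hε : 0 < ε) (hδ : 0 < δ) {m : ℕ}
    (hm : m ≠ 0) (hδm : Real.log (1 / δ) ≤ m) :
    (#{i | δ ≤ PrU fun x => d1 f i x ≤ -ε} : ℝ) ≤ 2 * Real.exp 1 * m / ε := by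
  set B := univ.filter fun i => δ ≤ PrU fun x => d1 f i x ≤ -ε
  -- With `p ^ m = 1 / 2`, the measure `μ_{p ^ m}` is the uniform one.
  set p : ℝ := (1 / 2) ^ (m : ℝ)⁻¹
  have hp0 : 0 ≤ p := by positivity
  have hp1 : p ≤ 1 := Real.rpow_le_one (by norm_num) (by norm_num) (by positivity)
  have hpm : p ^ m = 1 / 2 := Real.rpow_inv_natCast_pow (by norm_num) hm
  have hterm : ∀ i ∈ B, 1 / (2 * m) * Real.exp (-1)
      ≤ (1 - p) * biasedProb p {x | d1 f i x ≤ -ε} := by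
    intro i hi
    have hδE : δ ≤ biasedProb (p ^ m) {x | d1 f i x ≤ -ε} := by
      rw [hpm, biasedProb_half]
      exact (mem_filter.mp hi).2
    exact mul_le_mul (one_div_two_mul_le_one_sub hp0 hm hpm)
      ((hf.isUpperSet_setOf_d1_le i (-ε)).exp_neg_one_le_biasedProb hp0 hp1 hm hδ hδm hδE) (Real.exp_pos _).le
      (by linarith)
  have hsum : (#B : ℝ) * (1 / (2 * m) * Real.exp (-1)) ≤ 1 / ε :=
    calc (#B : ℝ) * (1 / (2 * m) * Real.exp (-1))
        ≤ ∑ i ∈ B, (1 - p) * biasedProb p {x | d1 f i x ≤ -ε} := by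
          rw [← nsmul_eq_mul, ← sum_const]
          exact sum_le_sum hterm
      _ ≤ (1 - p) * ∑ i, biasedProb p {x | d1 f i x ≤ -ε} := by
          rw [mul_sum]
          exact sum_le_sum_of_subset_of_nonneg (subset_univ B) fun i _ _ =>
            mul_nonneg (by linarith) (biasedProb_nonneg hp0 hp1 _)
      _ ≤ 1 / ε := hf.one_sub_mul_sum_biasedProb_le hf01 hε hp0 hp1
  have hm0 : (0 : ℝ) < m := by exact_mod_cast Nat.pos_of_ne_zero hm
  rw [Real.exp_neg] at hsum
  rw [le_div_iff₀ hε]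
  field_simp at hsum
  linarith

theorem Submodular.card_le_PrU_abs_d1_ge {f : (Fin n → Bool) → ℝ} (hf : Submodular f)
    (hf01 : ∀ x, f x ∈ Set.Icc (0 : ℝ) 1) {ε δ : ℝ} (hε : 0 < ε) (hδ : 0 < δ) {m : ℕ}
    (hm : m ≠ 0) (hδm : Real.log (1 / δ) ≤ m) :
    (#{i | 2 * δ ≤ PrU fun x => ε ≤ |d1 f i x|} : ℝ) ≤ 4 * Real.exp 1 * m / ε := by
  have hpos : ∀ i, PrU (fun x => ε ≤ d1 f i x) = PrU fun x => d1 (fun y => f yᶜ) i x ≤ -ε := by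
    intro i
    rw [← PrU_comp_compl fun x => ε ≤ d1 f i x]
    simp only [d1_comp_compl, neg_le_neg_iff]
  have hsplit : (univ.filter fun i => 2 * δ ≤ PrU fun x => ε ≤ |d1 f i x|)
      ⊆ (univ.filter fun i => δ ≤ PrU fun x => d1 f i x ≤ -ε)
        ∪ univ.filter fun i => δ ≤ PrU fun x => d1 (fun y => f yᶜ) i x ≤ -ε := by
    intro i hi
    have hor := (mem_filter.mp hi).2.trans <| (PrU_mono fun x hx => le_abs'.mp hx).trans
      (PrU_or_le (fun x => d1 f i x ≤ -ε) fun x => ε ≤ d1 f i x)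
    rw [hpos] at hor
    simp only [mem_union, mem_filter, mem_univ, true_and]
    by_contra! h
    linarith [h.1, h.2]
  calc (#{i | 2 * δ ≤ PrU fun x => ε ≤ |d1 f i x|} : ℝ)
      ≤ #{i | δ ≤ PrU fun x => d1 f i x ≤ -ε}
        + #{i | δ ≤ PrU fun x => d1 (fun y => f yᶜ) i x ≤ -ε} := by
        exact_mod_cast (card_le_card hsplit).trans (card_union_le _ _)
    _ ≤ 2 * Real.exp 1 * m / ε + 2 * Real.exp 1 * m / ε :=
        add_le_add (hf.card_le_PrU_d1_le_neg hf01 hε hδ hm hδm)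
          (hf.comp_compl.card_le_PrU_d1_le_neg (fun x => hf01 xᶜ) hε hδ hm hδm)
    _ = 4 * Real.exp 1 * m / ε := by ring

theorem Submodular.card_le_tnorm_d1_ge {f : (Fin n → Bool) → ℝ} (hf : Submodular f)
    (hf01 : ∀ x, f x ∈ Set.Icc (0 : ℝ) 1) {ε : ℝ} (hε : 0 < ε) {m : ℕ} (hm : m ≠ 0)
    (hεm : Real.log (2 * (2 / ε) ^ 3) ≤ m) :
    (#{i | ε ≤ tnorm (d1 f i)} : ℝ) ≤ 8 * Real.exp 1 * m / ε := by
  have hsub : (univ.filter fun i => ε ≤ tnorm (d1 f i))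
      ⊆ univ.filter fun i => 2 * ((ε / 2) ^ 3 / 2) ≤ PrU fun x => ε / 2 ≤ |d1 f i x| := by
    intro i hi
    simp only [mem_filter, mem_univ, true_and] at hi ⊢
    convert pow_three_le_PrU_of_lt_tnorm (by positivity) (by linarith : ε / 2 < tnorm (d1 f i))
      using 1
    ring
  have hδ : 1 / ((ε / 2) ^ 3 / 2) = 2 * (2 / ε) ^ 3 := by field_simp
  calc (#{i | ε ≤ tnorm (d1 f i)} : ℝ)
      ≤ 4 * Real.exp 1 * m / (ε / 2) := (Nat.cast_le.mpr (card_le_card hsub)).trans <|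
        hf.card_le_PrU_abs_d1_ge hf01 (half_pos hε) (by positivity) hm (hδ ▸ hεm)
    _ = 8 * Real.exp 1 * m / ε := by field_simp; ring

end Cube

end

open Classical in
/-- There is a universal C > 0 such that for every submodular
f : {0,1}^n → [0,1] and 0 < ε < 1, the number of coordinates with ‖∂_i f‖_T ≥ ε
is at most (C/ε)·log(2/ε). -/
theorem stmt8 : ∃ C : ℝ, 0 < C ∧ ∀ (n : ℕ) (f : (Fin n → Bool) → ℝ),
    Submodular f → (∀ x, f x ∈ Set.Icc (0 : ℝ) 1) → ∀ ε : ℝ, 0 < ε → ε < 1 →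
    ((Finset.univ.filter (fun i : Fin n => ε ≤ tnorm (d1 f i))).card : ℝ)
      ≤ C / ε * Real.log (2 / ε) := by
  refine ⟨200, by norm_num, fun n f hf hf01 ε hε0 hε1 => ?_⟩
  set L := Real.log (2 / ε)
  have hL : Real.log 2 ≤ L := Real.log_le_log (by norm_num) (by rw [le_div_iff₀ hε0]; linarith)
  have hlog : Real.log (2 * (2 / ε) ^ 3) = Real.log 2 + 3 * L := by
    rw [Real.log_mul two_ne_zero (by positivity), Real.log_pow]
    push_cast
    ring
  have hlog2 := Real.log_two_gt_d9
  set m := ⌈Real.log (2 * (2 / ε) ^ 3)⌉₊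
  have hm : m ≠ 0 := (Nat.ceil_pos.mpr (by linarith)).ne'
  have hmL : (m : ℝ) < Real.log 2 + 3 * L + 1 := hlog ▸ Nat.ceil_lt_add_one (by linarith)
  have he := Real.exp_one_lt_d9
  calc _ ≤ 8 * Real.exp 1 * m / ε := hf.card_le_tnorm_d1_ge hf01 hε0 hm (Nat.le_ceil _)
    _ ≤ 200 / ε * L := by
        rw [div_mul_eq_mul_div]
        exact div_le_div_of_nonneg_right (by nlinarith [Real.exp_pos 1]) hε0.le
end

section
/- For any XOS function f : {0,1}^n → ℝ₊, the total influence satisfies Σ_{i=1}^n E_{x∼U}[ |∂_i f(x)| ] ≤ 2 · E_{x∼U}[ f(x) ]; equivalently, Σ_{i=1}^n ‖(1/2)∂_i f‖₁ ≤ ‖f‖₁. -/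
open Finset

/-!
An XOS function is monotone, so `|∂ᵢ f| = ∂ᵢ f`, and pairing `x` with `x` flipped at `i` gives
`E[∂ᵢ f] = 2 E[f(x) - f(x_{i←0})]`. At a fixed `x`, the clause `c` attaining the maximum satisfies
`f(x) - f(x_{i←0}) ≤ w_{c,i} xᵢ`; summing over `i` bounds the total by `f(x)`.
-/

open Function

@[simp] lemma bval_true : bval true = 1 := rfl

@[simp] lemma bval_false : bval false = 0 := rfl

section Cube

variable {ι : Type*} [Fintype ι] [DecidableEq ι]

lemma sum_mul_bval_update (w : ι → ℝ) (x : ι → Bool) (i : ι) (b : Bool) :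
    ∑ j, w j * bval (update x i b j) = ∑ j, w j * bval (x j) + w i * (bval b - bval (x i)) := by
  simp_rw [apply_update (fun j a => w j * bval a)]
  rw [sum_update_of_mem (mem_univ i), Fintype.sum_eq_add_sum_compl i, compl_eq_univ_sdiff]
  ring

lemma sum_comp_update_true_add_sum_comp_update_false (g : (ι → Bool) → ℝ) (i : ι) :
    ∑ x, g (update x i true) + ∑ x, g (update x i false) = 2 * ∑ x, g x := by
  let flipAt : Equiv.Perm (ι → Bool) :=
    Involutive.toPerm (fun x => update x i (!x i)) fun x => by simp
  have hpair : ∀ x, g (update x i true) + g (update x i false) = g x + g (flipAt x) := by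
    intro x
    change _ = g x + g (update x i (!x i))
    cases hx : x i
    · rw [← hx, update_eq_self, add_comm, hx, Bool.not_false]
    · rw [← hx, update_eq_self, hx, Bool.not_true]
  rw [← sum_add_distrib, sum_congr rfl fun x _ => hpair x, sum_add_distrib, Equiv.sum_comp]
  ring

end Cube

lemma sum_d1_eq_two_mul_sum_sub_update_false {n : ℕ} (f : (Fin n → Bool) → ℝ) (i : Fin n) :
    ∑ x, d1 f i x = 2 * ∑ x, (f x - f (update x i false)) := by
  have := sum_comp_update_true_add_sum_comp_update_false f i
  simp only [d1, sum_sub_distrib]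
  linarith

namespace IsXOS

variable {n : ℕ} {f : (Fin n → Bool) → ℝ}

lemma d1_nonneg (hf : IsXOS f) (i : Fin n) (x : Fin n → Bool) : 0 ≤ d1 f i x := by
  obtain ⟨m, w, hw, hfx⟩ := hf
  rw [d1, sub_nonneg, hfx, hfx]
  refine sup'_mono_fun fun c _ => ?_
  simp only [sum_mul_bval_update, bval_true, bval_false]
  nlinarith [hw c i]

lemma sum_sub_update_false_le (hf : IsXOS f) (x : Fin n → Bool) :
    ∑ i, (f x - f (update x i false)) ≤ f x := by
  obtain ⟨m, w, hw, hfx⟩ := hf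
  obtain ⟨c, -, hc⟩ := exists_mem_eq_sup' univ_nonempty fun c => ∑ i, w c i * bval (x i)
  have hfc : f x = ∑ i, w c i * bval (x i) := (hfx x).trans hc
  have hdrop : ∀ i, f x - f (update x i false) ≤ w c i * bval (x i) := by
    intro i
    have hclause := le_sup' (fun c => ∑ j, w c j * bval (update x i false j)) (mem_univ c)
    rw [← hfx, sum_mul_bval_update, bval_false] at hclause
    linarith
  calc ∑ i, (f x - f (update x i false)) ≤ ∑ i, w c i * bval (x i) := sum_le_sum fun i _ => hdrop i
    _ = f x := hfc.symm

lemma sum_sum_abs_d1_le (hf : IsXOS f) :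
    ∑ i, ∑ x, |d1 f i x| ≤ 2 * ∑ x, f x := by
  calc ∑ i, ∑ x, |d1 f i x| = ∑ i, ∑ x, d1 f i x := by
        simp_rw [abs_of_nonneg (hf.d1_nonneg _ _)]
    _ = 2 * ∑ x, ∑ i, (f x - f (update x i false)) := by
        rw [sum_congr rfl fun i _ => sum_d1_eq_two_mul_sum_sub_update_false f i, ← mul_sum, sum_comm]
    _ ≤ 2 * ∑ x, f x := by
        gcongr with x
        exact hf.sum_sub_update_false_le x

end IsXOS

/-- For an XOS function f, the total influence satisfies
Σ_i E[|∂_i f(x)|] ≤ 2 E[f(x)]. -/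
theorem stmt13 {n : ℕ} (f : (Fin n → Bool) → ℝ) (hf : IsXOS f) :
    ∑ i : Fin n, EU (fun x => |d1 f i x|) ≤ 2 * EU f := by
  simp only [EU, ← sum_div, ← mul_div_assoc]
  gcongr
  exact hf.sum_sum_abs_d1_le
end

section
/- Let V ⊆ ℝⁿ be a nonempty compact set and define φ : 2^{[n]} → ℝ by φ(A) = E_{σ}[ max_{v∈V} Σ_{i∈A} σ_i v_i ], where σ is uniform over {−1,1}^A (and φ(∅) = 0). Then φ(∅) = 0, φ is monotone (φ(A) ≤ φ(A') whenever A ⊆ A'), and φ is fractionally subadditive: φ(A) ≤ Σ_{j=1}^m β_j φ(B_j) whenever β_j ≥ 0 and Σ_{j : i ∈ B_j} β_j ≥ 1 for every i ∈ A. Consequently φ is an XOS function. -/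
open Finset

/-- The real sign ±1 of a Boolean. -/
def sgn (b : Bool) : ℝ := if b then 1 else -1

/-- The (unnormalized) Rademacher complexity of V ⊆ ℝⁿ restricted to the
coordinates in A: φ(A) = E_{σ ∼ {−1,1}^A}[ sup_{v∈V} Σ_{i∈A} σ_i v_i ]. -/
noncomputable def radSet {n : ℕ} (V : Set (Fin n → ℝ)) (A : Finset (Fin n)) : ℝ :=
  (∑ σ : {i // i ∈ A} → Bool,
      sSup ((fun v : Fin n → ℝ => ∑ i ∈ A.attach, sgn (σ i) * v i.1) '' V)) / 2 ^ A.card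

/-!
Fix `A` and, for each sign vector `σ`, a maximizer `v σ ∈ V` of `∑ i ∈ A, σᵢ vᵢ` (it exists by
compactness). The weights `w_A i = E[σᵢ (v σ)ᵢ]` (`i ∈ A`, zero elsewhere) sum over `A` to `φ(A)`,
and over any `B` to `E[∑ i ∈ A ∩ B, σᵢ (v σ)ᵢ] ≤ φ(A ∩ B) ≤ φ(B)`. Nonnegativity of `w_A i` and
monotonicity of `φ` both come from pairing `σ` with the sign vector that flips `σᵢ`. Hence
`φ(B) = max_A ∑ i ∈ B, w_A i` is XOS, and every XOS function vanishes at `∅`, is monotone and is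
fractionally subadditive.
-/

section XOS

variable {ι κ : Type*} [Fintype κ] [Nonempty κ]

noncomputable def xosValue (w : κ → ι → ℝ) (A : Finset ι) : ℝ :=
  univ.sup' univ_nonempty fun c => ∑ i ∈ A, w c i

theorem xosValue_empty (w : κ → ι → ℝ) : xosValue w ∅ = 0 := by
  simp [xosValue]

theorem monotone_xosValue {w : κ → ι → ℝ} (hw : ∀ c i, 0 ≤ w c i) : Monotone (xosValue w) :=
  fun _ _ hAB => sup'_mono_fun fun c _ =>
    sum_le_sum_of_subset_of_nonneg hAB fun i _ _ => hw c i

theorem sum_le_sum_mul_sum_of_cover [DecidableEq ι] {J : Type*} [Fintype J] {w : ι → ℝ}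
    (hw : ∀ i, 0 ≤ w i) {A : Finset ι} {β : J → ℝ} {B : J → Finset ι} (hβ : ∀ j, 0 ≤ β j)
    (hcover : ∀ i ∈ A, 1 ≤ ∑ j, if i ∈ B j then β j else 0) :
    ∑ i ∈ A, w i ≤ ∑ j, β j * ∑ i ∈ B j, w i :=
  calc ∑ i ∈ A, w i
      ≤ ∑ i ∈ A, (∑ j, if i ∈ B j then β j else 0) * w i :=
        sum_le_sum fun i hi => le_mul_of_one_le_left (hw i) (hcover i hi)
    _ = ∑ j, β j * ∑ i ∈ A ∩ B j, w i := by
        simp only [sum_mul, ite_mul, zero_mul, mul_sum]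
        rw [sum_comm]
        simp only [sum_ite_mem]
    _ ≤ ∑ j, β j * ∑ i ∈ B j, w i :=
        sum_le_sum fun j _ => mul_le_mul_of_nonneg_left
          (sum_le_sum_of_subset_of_nonneg inter_subset_right fun i _ _ => hw i) (hβ j)

theorem xosValue_le_sum_mul [DecidableEq ι] {J : Type*} [Fintype J] {w : κ → ι → ℝ}
    (hw : ∀ c i, 0 ≤ w c i) {A : Finset ι} {β : J → ℝ} {B : J → Finset ι}
    (hβ : ∀ j, 0 ≤ β j) (hcover : ∀ i ∈ A, 1 ≤ ∑ j, if i ∈ B j then β j else 0) :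
    xosValue w A ≤ ∑ j, β j * xosValue w (B j) := by
  obtain ⟨c, -, hc⟩ := exists_mem_eq_sup' univ_nonempty fun c => ∑ i ∈ A, w c i
  calc xosValue w A = ∑ i ∈ A, w c i := hc
    _ ≤ ∑ j, β j * ∑ i ∈ B j, w c i := sum_le_sum_mul_sum_of_cover (hw c) hβ hcover
    _ ≤ ∑ j, β j * xosValue w (B j) :=
        sum_le_sum fun j _ => mul_le_mul_of_nonneg_left
          (le_sup' (fun c => ∑ i ∈ B j, w c i) (mem_univ c)) (hβ j)

end XOS

theorem exists_xosValue_eq_of_supporting_weights {ι : Type*} [Fintype ι] (f : Finset ι → ℝ)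
    (h : ∀ A, ∃ w : ι → ℝ, (∀ i, 0 ≤ w i) ∧ ∑ i ∈ A, w i = f A ∧ ∀ B, ∑ i ∈ B, w i ≤ f B) :
    ∃ (m : ℕ) (w : Fin (m + 1) → ι → ℝ), (∀ c i, 0 ≤ w c i) ∧ ∀ A, f A = xosValue w A := by
  choose W hW_nonneg hW_eq hW_le using h
  have hcard : Fintype.card (Finset ι) = 2 ^ Fintype.card ι - 1 + 1 := by
    rw [Fintype.card_finset, Nat.sub_add_cancel Nat.one_le_two_pow]
  let e := (Fintype.equivFinOfCardEq hcard).symm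
  refine ⟨_, fun c => W (e c), fun c => hW_nonneg (e c), fun A => le_antisymm ?_ ?_⟩
  · calc f A = ∑ i ∈ A, W (e (e.symm A)) i := by rw [e.apply_symm_apply, hW_eq]
      _ ≤ xosValue (fun c => W (e c)) A := le_sup' (fun c => ∑ i ∈ A, W (e c) i) (mem_univ _)
  · exact sup'_le _ _ fun c _ => hW_le (e c) A

theorem Finset.sum_comp_restrict {ι β M : Type*} [Fintype ι] [DecidableEq ι]
    [Fintype β] [AddCommMonoid M] (s : Finset ι) (g : (s → β) → M) :
    ∑ σ : ι → β, g (fun i => σ i) = Fintype.card ({i // i ∉ s} → β) • ∑ τ, g τ := by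
  rw [← (Equiv.piEquivPiSubtypeProd (· ∈ s) fun _ => β).symm.sum_comp,
    Fintype.sum_prod_type_right]
  have hrestrict : ∀ τ ρ, (fun i : s =>
      (Equiv.piEquivPiSubtypeProd (· ∈ s) fun _ => β).symm (τ, ρ) i) = τ :=
    fun τ ρ => funext fun i => dif_pos i.2
  simp only [hrestrict, sum_const, card_univ]

section Rademacher

variable {n : ℕ}

def signedSum (A : Finset (Fin n)) (σ : Fin n → Bool) (v : Fin n → ℝ) : ℝ :=
  ∑ i ∈ A, sgn (σ i) * v i

noncomputable def maxSignedSum (V : Set (Fin n → ℝ)) (A : Finset (Fin n)) (σ : Fin n → Bool) :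
    ℝ :=
  sSup (signedSum A σ '' V)

theorem radSet_eq_EU (V : Set (Fin n → ℝ)) (A : Finset (Fin n)) :
    radSet V A = EU (maxSignedSum V A) := by
  have hsum := A.sum_comp_restrict
    fun τ => sSup ((fun v : Fin n → ℝ => ∑ i ∈ A.attach, sgn (τ i) * v i.1) '' V)
  have hcard : Fintype.card ({i // i ∉ A} → Bool) = 2 ^ (n - #A) := by
    simp [Fintype.card_subtype_compl]
  have hrad : ∑ τ : {i // i ∈ A} → Bool,
      sSup ((fun v : Fin n → ℝ => ∑ i ∈ A.attach, sgn (τ i) * v i.1) '' V)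
        = radSet V A * 2 ^ #A :=
    (div_mul_cancel₀ _ (pow_ne_zero #A two_ne_zero)).symm
  rw [hrad, hcard, nsmul_eq_mul] at hsum
  simp only [sum_attach A fun i => sgn _ * _] at hsum
  rw [EU, show ∑ σ, maxSignedSum V A σ = _ from hsum, Nat.cast_pow, Nat.cast_two, mul_left_comm,
    ← pow_add, Nat.sub_add_cancel (card_le_univ A |>.trans_eq (Fintype.card_fin n)),
    mul_div_cancel_right₀ _ (pow_ne_zero n two_ne_zero)]

theorem continuous_signedSum (A : Finset (Fin n)) (σ : Fin n → Bool) :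
    Continuous (signedSum A σ) :=
  continuous_finsetSum _ fun i _ => continuous_const.mul (continuous_apply i)

theorem signedSum_eq_add_erase {A : Finset (Fin n)} {i : Fin n} (hi : i ∈ A) (σ : Fin n → Bool)
    (v : Fin n → ℝ) : signedSum A σ v = sgn (σ i) * v i + signedSum (A.erase i) σ v :=
  (add_sum_erase A _ hi).symm

variable {V : Set (Fin n → ℝ)}

theorem maxSignedSum_eq_of_isMaxOn {A : Finset (Fin n)} {σ : Fin n → Bool} {v : Fin n → ℝ}
    (hv : v ∈ V) (hmax : IsMaxOn (signedSum A σ) V v) : maxSignedSum V A σ = signedSum A σ v :=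
  IsGreatest.csSup_eq ⟨⟨v, hv, rfl⟩, by rintro _ ⟨u, hu, rfl⟩; exact hmax hu⟩

theorem signedSum_le_maxSignedSum (hcomp : IsCompact V) {v : Fin n → ℝ} (hv : v ∈ V)
    (A : Finset (Fin n)) (σ : Fin n → Bool) : signedSum A σ v ≤ maxSignedSum V A σ :=
  le_csSup (hcomp.image (continuous_signedSum A σ)).bddAbove ⟨v, hv, rfl⟩

def flipAt (j : Fin n) (σ : Fin n → Bool) : Fin n → Bool :=
  Function.update σ j (!σ j)

theorem flipAt_involutive (j : Fin n) : Function.Involutive (flipAt j) := by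
  intro σ
  ext i
  by_cases h : i = j
  · subst h; simp [flipAt]
  · simp [flipAt, Function.update_of_ne h]

theorem sgn_flipAt_self (j : Fin n) (σ : Fin n → Bool) : sgn (flipAt j σ j) = -sgn (σ j) := by
  cases h : σ j <;> simp [flipAt, sgn, h]

theorem signedSum_flipAt_of_notMem {C : Finset (Fin n)} {j : Fin n} (hj : j ∉ C)
    (σ : Fin n → Bool) (v : Fin n → ℝ) : signedSum C (flipAt j σ) v = signedSum C σ v :=
  sum_congr rfl fun i hi => by
    rw [flipAt, Function.update_of_ne (ne_of_mem_of_not_mem hi hj)]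

theorem EU_mono {f g : (Fin n → Bool) → ℝ} (h : ∀ σ, f σ ≤ g σ) : EU f ≤ EU g := by
  unfold EU
  gcongr with σ
  exact h σ

theorem EU_sum {ι : Type*} (s : Finset ι) (g : ι → (Fin n → Bool) → ℝ) :
    EU (fun σ => ∑ i ∈ s, g i σ) = ∑ i ∈ s, EU (g i) := by
  simp only [EU, ← sum_div]
  rw [sum_comm]

theorem EU_le_of_le_half_add_flipAt (j : Fin n) {f g : (Fin n → Bool) → ℝ}
    (h : ∀ σ, f σ ≤ (g σ + g (flipAt j σ)) / 2) : EU f ≤ EU g :=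
  calc EU f ≤ EU (fun σ => (g σ + g (flipAt j σ)) / 2) := EU_mono h
    _ = EU g := by
        have hflip : ∑ σ, g (flipAt j σ) = ∑ σ, g σ :=
          Equiv.sum_comp ((flipAt_involutive j).toPerm _) g
        simp only [EU, ← sum_div, sum_add_distrib, hflip]
        ring

theorem EU_maxSignedSum_le_insert (hne : V.Nonempty) (hcomp : IsCompact V) {C : Finset (Fin n)}
    {j : Fin n} (hj : j ∉ C) : EU (maxSignedSum V C) ≤ EU (maxSignedSum V (insert j C)) := by
  refine EU_le_of_le_half_add_flipAt j fun σ => ?_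
  obtain ⟨v, hv, hmax⟩ := hcomp.exists_isMaxOn hne (continuous_signedSum C σ).continuousOn
  have h₁ := signedSum_le_maxSignedSum hcomp hv (insert j C) σ
  have h₂ := signedSum_le_maxSignedSum hcomp hv (insert j C) (flipAt j σ)
  rw [signedSum_eq_add_erase (mem_insert_self j C), erase_insert hj] at h₁ h₂
  rw [sgn_flipAt_self, signedSum_flipAt_of_notMem hj] at h₂
  rw [maxSignedSum_eq_of_isMaxOn hv hmax]
  linarith

theorem monotone_radSet (hne : V.Nonempty) (hcomp : IsCompact V) : Monotone (radSet V) := by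
  refine monotone_iff_forall_le_insert.2 fun C j hj => ?_
  rw [radSet_eq_EU, radSet_eq_EU]
  exact EU_maxSignedSum_le_insert hne hcomp hj

noncomputable def rademacherWeight (A : Finset (Fin n)) (v : (Fin n → Bool) → Fin n → ℝ)
    (i : Fin n) : ℝ :=
  if i ∈ A then EU (fun σ => sgn (σ i) * v σ i) else 0

theorem sum_rademacherWeight (A B : Finset (Fin n)) (v : (Fin n → Bool) → Fin n → ℝ) :
    ∑ i ∈ B, rademacherWeight A v i = EU (fun σ => signedSum (B ∩ A) σ (v σ)) := by
  simp only [rademacherWeight, sum_ite_mem, signedSum, EU_sum]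

theorem rademacherWeight_nonneg {A : Finset (Fin n)} {v : (Fin n → Bool) → Fin n → ℝ}
    (hv : ∀ σ, v σ ∈ V) (hmax : ∀ σ, IsMaxOn (signedSum A σ) V (v σ)) (i : Fin n) :
    0 ≤ rademacherWeight A v i := by
  unfold rademacherWeight
  split_ifs with hi
  · calc (0 : ℝ) = EU (fun _ => 0) := by simp [EU]
      _ ≤ _ := EU_le_of_le_half_add_flipAt i fun σ => ?_
    have h₁ := isMaxOn_iff.1 (hmax σ) _ (hv (flipAt i σ))
    have h₂ := isMaxOn_iff.1 (hmax (flipAt i σ)) _ (hv σ)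
    simp only [signedSum_eq_add_erase hi, sgn_flipAt_self,
      signedSum_flipAt_of_notMem (notMem_erase i A)] at h₁ h₂ ⊢
    linarith
  · exact le_rfl

theorem exists_supporting_weights_radSet (hne : V.Nonempty) (hcomp : IsCompact V)
    (A : Finset (Fin n)) : ∃ w : Fin n → ℝ, (∀ i, 0 ≤ w i) ∧ ∑ i ∈ A, w i = radSet V A ∧
      ∀ B, ∑ i ∈ B, w i ≤ radSet V B := by
  choose v hv hmax using fun σ => hcomp.exists_isMaxOn hne (continuous_signedSum A σ).continuousOn
  refine ⟨rademacherWeight A v, rademacherWeight_nonneg hv hmax, ?_, fun B => ?_⟩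
  · rw [sum_rademacherWeight, inter_self, radSet_eq_EU]
    exact congrArg EU (funext fun σ => (maxSignedSum_eq_of_isMaxOn (hv σ) (hmax σ)).symm)
  · calc ∑ i ∈ B, rademacherWeight A v i
        ≤ EU (maxSignedSum V (B ∩ A)) := by
          rw [sum_rademacherWeight]
          exact EU_mono fun σ => signedSum_le_maxSignedSum hcomp (hv σ) _ _
      _ = radSet V (B ∩ A) := (radSet_eq_EU V _).symm
      _ ≤ radSet V B := monotone_radSet hne hcomp inter_subset_left

end Rademacher

/-- For nonempty compact V ⊆ ℝⁿ, the Rademacher complexity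
function φ satisfies φ(∅) = 0, is monotone, fractionally subadditive, and is
consequently an XOS set function. -/
theorem stmt18 {n : ℕ} (V : Set (Fin n → ℝ)) (hne : V.Nonempty) (hcomp : IsCompact V) :
    radSet V ∅ = 0 ∧
    (∀ A B : Finset (Fin n), A ⊆ B → radSet V A ≤ radSet V B) ∧
    (∀ (A : Finset (Fin n)) (m : ℕ) (β : Fin m → ℝ) (B : Fin m → Finset (Fin n)),
      (∀ j, 0 ≤ β j) → (∀ i ∈ A, 1 ≤ ∑ j, if i ∈ B j then β j else 0) →
      radSet V A ≤ ∑ j, β j * radSet V (B j)) ∧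
    (∃ (m : ℕ) (w : Fin (m + 1) → Fin n → ℝ), (∀ c i, 0 ≤ w c i) ∧
      ∀ A : Finset (Fin n), radSet V A = Finset.univ.sup' Finset.univ_nonempty
        (fun c => ∑ i ∈ A, w c i)) := by
  obtain ⟨m, w, hw, hφ⟩ := exists_xosValue_eq_of_supporting_weights (radSet V)
    (exists_supporting_weights_radSet hne hcomp)
  rw [show radSet V = xosValue w from funext hφ]
  exact ⟨xosValue_empty w, fun _ _ hAB => monotone_xosValue hw hAB,
    fun _ _ _ _ hβ hcover => xosValue_le_sum_mul hw hβ hcover, m, w, hw, fun _ => rfl⟩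
end
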